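/- Let (α, β) be a Bailey pair relative to a = q^ℓ, where ℓ is a non-negative integer; i.e. β_L = Σ_{r=0}^{L} α_r / ((q)_{L-r} (q^{ℓ+1};q)_{L+r}) for all integers L ≥ 0. Then for every integer L ≥ 0 one has Σ_{s=0, s ≡ L+ℓ (mod 2)}^{L-ℓ} q^{s²/2} / ((q)_ℓ (q)_s) · β_{(L-s-ℓ)/2} = Σ_{r=0}^{⌊(L-ℓ)/2⌋} Q_0(L, 2r+ℓ, q) · α_r. (For ℓ > L both sides are empty sums, i.e. 0.) -/
import Mathlib


open Finset

noncomputable section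

/-- The field `F = RatFunc ℚ` of rational functions over `ℚ` in the variable `t`,
where `t` plays the role of `q^(1/2)`. -/
abbrev F : Type := RatFunc ℚ

/-- The variable `t = q^(1/2)`. -/
def t : F := RatFunc.X

/-- `q = t^2`. -/
def q : F := t ^ 2

/-- The Pochhammer symbol `(a; b)_n = ∏_{k=0}^{n-1} (1 - a bᵏ)`, set equal to `0` for
negative `n` (so that any term containing a factor `1/(a;b)_n` with `n < 0` vanishes). -/
def poch (b a : F) (n : ℤ) : F :=
  if n < 0 then 0 else ∏ k ∈ Finset.range n.toNat, (1 - a * b ^ k)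

/-- The `q`-trinomial coefficient `((L; B; qq))_{A,2}` with base `qq`:
`∑_j qq^(j(j+B)) (qq)_L / ((qq)_j (qq)_{j+A} (qq)_{L-2j-A})`; the sum is finite since
terms with a negative Pochhammer index in the denominator vanish. -/
def trinom (qq : F) (L : ℕ) (B A : ℤ) : F :=
  ∑ j ∈ Finset.range (L + 1),
    qq ^ ((j : ℤ) * ((j : ℤ) + B)) * poch qq qq (L : ℤ) /
      (poch qq qq (j : ℤ) * poch qq qq ((j : ℤ) + A) *
        poch qq qq ((L : ℤ) - 2 * (j : ℤ) - A))

/-- `T_n(L, A, q) = q^((L(L-n) - A(A-n))/2) ((L; A-n; q⁻¹))_{A,2}`; note `t ^ m = q ^ (m/2)`. -/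
def T (n : ℤ) (L : ℕ) (A : ℤ) : F :=
  t ^ ((L : ℤ) * ((L : ℤ) - n) - A * (A - n)) * trinom q⁻¹ L (A - n) A

/-- `Q_n(L, A, q) = T_n(L, A, q) / (q)_L`. -/
def Q (n : ℤ) (L : ℕ) (A : ℤ) : F := T n L A / poch q q (L : ℤ)

/-! ### Auxiliary lemmas -/

lemma t_ne : t ≠ 0 := RatFunc.X_ne_zero

lemma q_pow_ne_one (m : ℕ) (hm : m ≠ 0) : q ^ m ≠ 1 := by
  intro h
  have h2 : algebraMap (Polynomial ℚ) F (Polynomial.X ^ (2*m)) = algebraMap (Polynomial ℚ) F 1 := by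
    rw [map_pow, map_one, RatFunc.algebraMap_X]
    rw [q, t, ← pow_mul] at h
    exact h
  have h3 := RatFunc.algebraMap_injective ℚ h2
  have := congrArg Polynomial.natDegree h3
  simp [Polynomial.natDegree_X_pow] at this
  omega

lemma poch_nat (b a : F) (n : ℕ) : poch b a (n : ℤ) = ∏ k ∈ Finset.range n, (1 - a * b ^ k) := by
  simp [poch]

lemma poch_neg (b a : F) (n : ℤ) (h : n < 0) : poch b a n = 0 := by simp [poch, h]

lemma poch_q_ne_zero (n : ℕ) : poch q q (n : ℤ) ≠ 0 := by
  rw [poch_nat]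
  apply Finset.prod_ne_zero_iff.2
  intro k _ h
  apply q_pow_ne_one (k+1) (by omega)
  have : q ^ (k+1) = q * q ^ k := by ring
  rw [this]
  linear_combination -h

lemma poch_split (l m : ℕ) : poch q q ((l+m : ℕ) : ℤ) = poch q q l * poch q (q ^ (l+1)) m := by
  induction m with
  | zero => simp [poch_nat, poch]
  | succ m ih =>
    rw [show (l+(m+1)) = (l+m)+1 by ring]
    rw [poch_nat, Finset.prod_range_succ, ← poch_nat, ih, poch_nat q (q^(l+1)) (m+1),
      Finset.prod_range_succ, ← poch_nat]
    rw [mul_assoc]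
    congr 2
    rw [← pow_add]
    congr 1
    ring

lemma poch_inv (n : ℕ) : poch q⁻¹ q⁻¹ (n : ℤ) = (-1)^n * t ^ (-(n*(n+1)) : ℤ) * poch q q n := by
  induction n with
  | zero => simp [poch]
  | succ n ih =>
    rw [poch_nat, Finset.prod_range_succ, ← poch_nat, ih, poch_nat q q (n+1),
      Finset.prod_range_succ, ← poch_nat]
    have hq : q⁻¹ * (q⁻¹)^n = t ^ (-(2*((n:ℤ)+1)) : ℤ) := by
      rw [← pow_succ']
      rw [show (q⁻¹)^(n+1) = (q^(n+1))⁻¹ by rw [inv_pow]]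
      rw [q, ← pow_mul, ← zpow_natCast t, ← zpow_neg]
      congr 1 <;> (push_cast; ring)
    rw [hq]
    have hinv : t ^ (-(2*((n:ℤ)+1)) : ℤ) * t ^ ((2*((n:ℤ)+1)) : ℤ) = 1 := by
      rw [← zpow_add₀ t_ne]; simp
    have hqq : q * q ^ n = t ^ ((2*((n:ℤ)+1)) : ℤ) := by
      rw [q, ← pow_succ', ← pow_mul, ← zpow_natCast t]
      congr 1 <;> (push_cast; ring)
    have h1 : (1 : F) - t ^ (-(2*((n:ℤ)+1)) : ℤ) = -(t ^ (-(2*((n:ℤ)+1)) : ℤ)) * (1 - q * q ^ n) := by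
      rw [hqq]
      linear_combination -hinv
    rw [h1]
    have hz : t ^ (-(↑(n+1)*(↑(n+1)+1)) : ℤ) = t ^ (-(n*(n+1)) : ℤ) * t ^ (-(2*((n:ℤ)+1)) : ℤ) := by
      rw [← zpow_add₀ t_ne]; congr 1; push_cast; ring
    rw [hz]
    ring

lemma alg (u p1 p2 p3 pL s1 s2 s3 : F) (hu : u ≠ 0) (hp1 : p1 ≠ 0) (hp2 : p2 ≠ 0)
    (hp3 : p3 ≠ 0) (hpL : pL ≠ 0) (hs1 : s1 ≠ 0) (hs2 : s2 ≠ 0) (hs3 : s3 ≠ 0)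
    (e em eL e1 e2 e3 f : ℤ)
    (he : e + em + eL = e1 + e2 + e3 + f) :
    u^e * (u^em * ((s1*s2*s3) * u^eL * pL) / ((s1 * u^e1 * p1) * (s2 * u^e2 * p2) * (s3 * u^e3 * p3))) / pL
      = u^f / (p1*p2*p3) := by
  have key : u^e * u^em * u^eL = u^e1*u^e2*u^e3*u^f := by
    rw [← zpow_add₀ hu, ← zpow_add₀ hu, ← zpow_add₀ hu, ← zpow_add₀ hu, he]
    exact zpow_add₀ hu _ _
  have hD : (s1 * u^e1 * p1) * (s2 * u^e2 * p2) * (s3 * u^e3 * p3) ≠ 0 := by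
    apply mul_ne_zero (mul_ne_zero _ _) <;>
      first
        | exact mul_ne_zero (mul_ne_zero hs1 (zpow_ne_zero _ hu)) hp1
        | exact mul_ne_zero (mul_ne_zero hs2 (zpow_ne_zero _ hu)) hp2
        | exact mul_ne_zero (mul_ne_zero hs3 (zpow_ne_zero _ hu)) hp3
  rw [mul_div_assoc', div_div, div_eq_div_iff (mul_ne_zero hD hpL)
    (mul_ne_zero (mul_ne_zero hp1 hp2) hp3)]
  linear_combination (s1*s2*s3*pL*p1*p2*p3) * key

lemma qinv_zpow (m : ℤ) : (q⁻¹) ^ m = t ^ (-2 * m) := by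
  have h : q⁻¹ = t ^ (-2 : ℤ) := by
    rw [q, ← zpow_natCast t, ← zpow_neg]
    norm_num
  rw [h, ← zpow_mul]

lemma Q_eq (L a : ℕ) : Q 0 L (a : ℤ) =
    ∑ j ∈ Finset.range (L + 1),
      if 2*j + a ≤ L then
        (t ^ (((L - 2*j - a)^2 : ℕ) : ℤ)) /
          (poch q q (j : ℤ) * poch q q ((j + a : ℕ) : ℤ) * poch q q ((L - 2*j - a : ℕ) : ℤ))
      else 0 := by
  rw [Q, T, trinom]
  simp only [sub_zero]
  rw [Finset.mul_sum, Finset.sum_div]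
  apply Finset.sum_congr rfl
  intro j hj
  by_cases h : 2*j + a ≤ L
  · rw [if_pos h]
    have hc1 : ((j : ℤ) + (a : ℤ)) = ((j + a : ℕ) : ℤ) := by push_cast; ring
    have hc2 : ((L : ℤ) - 2*(j:ℤ) - (a:ℤ)) = ((L - 2*j - a : ℕ) : ℤ) := by
      have := h; push_cast; omega
    rw [hc1, hc2, qinv_zpow, poch_inv L, poch_inv j, poch_inv (j+a), poch_inv (L-2*j-a)]
    have hsign : ((-1 : F))^L = (-1)^j * ((-1 : F))^(j+a) * (-1)^(L-2*j-a) := by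
      rw [← pow_add, ← pow_add]
      congr 1
      omega
    rw [hsign]
    apply alg t _ _ _ _ _ _ _ t_ne (poch_q_ne_zero j) (poch_q_ne_zero (j+a))
      (poch_q_ne_zero (L-2*j-a)) (poch_q_ne_zero L) (by simp) (by simp) (by simp)
    have h3 : ((L - 2*j - a : ℕ) : ℤ) = (L : ℤ) - 2*j - a := by
      push_cast; omega
    push_cast
    rw [h3]
    ring
  · rw [if_neg h]
    have hneg : ((L : ℤ) - 2*(j:ℤ) - (a:ℤ)) < 0 := by omega
    rw [poch_neg _ _ _ hneg]
    simp


/-- Lemma 2 of Warnaar's note, case `n = 0`: each ordinary Bailey pair relative to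
`a = q^ℓ` gives rise to the stated trinomial identity. -/
theorem binomial_to_trinomial_n_zero (ℓ : ℕ) (α β : ℕ → F)
    (hBP : ∀ L : ℕ, β L = ∑ r ∈ Finset.range (L + 1),
      α r / (poch q q ((L : ℤ) - (r : ℤ)) * poch q (q ^ (ℓ + 1)) ((L : ℤ) + (r : ℤ)))) :
    ∀ L : ℕ,
      (∑ s ∈ Finset.range (L + 1),
        if (s : ℤ) ≤ (L : ℤ) - (ℓ : ℤ) ∧ (s + L + ℓ) % 2 = 0 then
          t ^ (s ^ 2) / (poch q q (ℓ : ℤ) * poch q q (s : ℤ)) * β ((L - s - ℓ) / 2)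
        else 0) =
      ∑ r ∈ Finset.range (L + 1),
        if 2 * r + ℓ ≤ L then Q 0 L (2 * (r : ℤ) + (ℓ : ℤ)) * α r else 0 := by
  intro L
  have hL : (∑ s ∈ Finset.range (L + 1),
        if (s : ℤ) ≤ (L : ℤ) - (ℓ : ℤ) ∧ (s + L + ℓ) % 2 = 0 then
          t ^ (s ^ 2) / (poch q q (ℓ : ℤ) * poch q q (s : ℤ)) * β ((L - s - ℓ) / 2)
        else 0) =
      ∑ p ∈ (Finset.range (L+1) ×ˢ Finset.range (L+1)).filter
          (fun p => p.1 + ℓ ≤ L ∧ (p.1 + L + ℓ) % 2 = 0 ∧ p.2 ≤ (L - p.1 - ℓ)/2),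
        t ^ (p.1 ^ 2) / (poch q q (ℓ : ℤ) * poch q q (p.1 : ℤ)) *
          (α p.2 / (poch q q (((L - p.1 - ℓ)/2 - p.2 : ℕ) : ℤ) *
            poch q (q ^ (ℓ + 1)) (((L - p.1 - ℓ)/2 + p.2 : ℕ) : ℤ))) := by
    rw [Finset.sum_filter, Finset.sum_product]
    apply Finset.sum_congr rfl
    intro s hs
    by_cases hc : (s : ℤ) ≤ (L : ℤ) - (ℓ : ℤ) ∧ (s + L + ℓ) % 2 = 0
    · rw [if_pos hc, hBP, Finset.mul_sum]
      have hsl : s + ℓ ≤ L := by omega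
      have hML : (L - s - ℓ)/2 + 1 ≤ L + 1 := by omega
      rw [← Finset.sum_subset (Finset.range_subset_range.2 hML) ?h0]
      case h0 =>
        intro r hr hr'
        rw [Finset.mem_range] at hr'
        apply if_neg
        rintro ⟨-, -, h3⟩
        omega
      apply Finset.sum_congr rfl
      intro r hr
      rw [Finset.mem_range] at hr
      rw [if_pos ⟨hsl, hc.2, by omega⟩]
      have e1 : (((L - s - ℓ)/2 : ℕ) : ℤ) - (r : ℤ) = (((L - s - ℓ)/2 - r : ℕ) : ℤ) := by
        push_cast
        omega
      have e2 : (((L - s - ℓ)/2 : ℕ) : ℤ) + (r : ℤ) = (((L - s - ℓ)/2 + r : ℕ) : ℤ) := by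
        push_cast
        ring
      rw [e1, e2]
    · rw [if_neg hc]
      symm
      apply Finset.sum_eq_zero
      intro r hr
      apply if_neg
      rintro ⟨h1, h2, -⟩
      exact hc ⟨by omega, h2⟩
  have hR : (∑ r ∈ Finset.range (L + 1),
        if 2 * r + ℓ ≤ L then Q 0 L (2 * (r : ℤ) + (ℓ : ℤ)) * α r else 0) =
      ∑ p ∈ (Finset.range (L+1) ×ˢ Finset.range (L+1)).filter
          (fun p => 2*p.2 + (2*p.1 + ℓ) ≤ L),
        (t ^ (((L - 2*p.2 - (2*p.1 + ℓ))^2 : ℕ) : ℤ)) /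
          (poch q q (p.2 : ℤ) * poch q q ((p.2 + (2*p.1 + ℓ) : ℕ) : ℤ) *
            poch q q ((L - 2*p.2 - (2*p.1 + ℓ) : ℕ) : ℤ)) * α p.1 := by
    rw [Finset.sum_filter, Finset.sum_product]
    apply Finset.sum_congr rfl
    intro r hr
    by_cases h2 : 2 * r + ℓ ≤ L
    · rw [if_pos h2, show (2 * (r:ℤ) + (ℓ:ℤ)) = ((2*r + ℓ : ℕ) : ℤ) by push_cast; ring,
        Q_eq, Finset.sum_mul]
      apply Finset.sum_congr rfl
      intro j hj
      by_cases h3 : 2*j + (2*r + ℓ) ≤ L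
      · rw [if_pos h3, if_pos h3]
      · rw [if_neg h3, if_neg h3, zero_mul]
    · rw [if_neg h2]
      symm
      apply Finset.sum_eq_zero
      intro j hj
      apply if_neg
      omega
  rw [hL, hR]
  apply Finset.sum_nbij' (i := fun p => (p.2, (L - p.1 - ℓ)/2 - p.2))
    (j := fun p => (L - 2*p.2 - (2*p.1 + ℓ), p.1))
  · intro p hp
    simp only [Finset.mem_filter, Finset.mem_product, Finset.mem_range] at hp ⊢
    omega
  · intro p hp
    simp only [Finset.mem_filter, Finset.mem_product, Finset.mem_range] at hp ⊢
    omega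
  · intro p hp
    simp only [Finset.mem_filter, Finset.mem_product, Finset.mem_range] at hp
    have : L - 2*((L - p.1 - ℓ)/2 - p.2) - (2*p.2 + ℓ) = p.1 := by omega
    simp only [Prod.ext_iff]
    constructor
    · omega
    · trivial
  · intro p hp
    simp only [Finset.mem_filter, Finset.mem_product, Finset.mem_range] at hp
    simp only [Prod.ext_iff]
    constructor
    · trivial
    · omega
  · intro p hp
    simp only [Finset.mem_filter, Finset.mem_product, Finset.mem_range] at hp
    obtain ⟨⟨hs1', hr1'⟩, hsl, hpar, hrM⟩ := hp
    have e1 : L - 2*((L - p.1 - ℓ)/2 - p.2) - (2*p.2 + ℓ) = p.1 := by omega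
    have e2 : ((L - p.1 - ℓ)/2 - p.2) + (2*p.2 + ℓ) = ℓ + ((L - p.1 - ℓ)/2 + p.2) := by omega
    simp only [e1, e2]
    rw [poch_split ℓ ((L - p.1 - ℓ)/2 + p.2)]
    rw [zpow_natCast]
    simp only [div_eq_mul_inv, mul_inv]
    ring
end
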